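/- arXiv:1306.4868 — 3 statements merged into one kernel-verified Lean document; each statement's English description precedes it below -/
import Mathlib

section
/- Let 1/2 < α < β < 1 and γ > 0. The infinite matrix A_{α,β,γ} = (a_{α,β,γ}(m,n))_{m,n≥1} is symmetric positive definite: a_{α,β,γ}(m,n) = a_{α,β,γ}(n,m) for all m, n ≥ 1, and for every finitely supported complex sequence (c_n)_{n≥1} that is not identically zero, Σ_{m≥1} Σ_{n≥1} conj(c_m) a_{α,β,γ}(m,n) c_n is a strictly positive real number. -/
open Complex

/-- The matrix entry `a_{α,β,γ}(m,n)`, with the conventions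
`((1/1)^α - (1/1)^β)/log 1 = β - α` and `sin(γ·0)/0 = γ`. -/
noncomputable def aMat (α β γ : ℝ) (m n : ℕ) : ℝ :=
  (if m * n = 1 then β - α
    else (((1 : ℝ) / (m * n)) ^ α - ((1 : ℝ) / (m * n)) ^ β) / Real.log (m * n)) *
  (if m = n then γ else Real.sin (γ * Real.log ((m : ℝ) / n)) / Real.log ((m : ℝ) / n))

/-!
Both factors of `a(m, n)` are integrals: `∫_α^β (mn)^{-s} ds` and `∫_0^γ cos(t log(m/n)) dt`.
Expanding `cos(t log m - t log n)` writes `a(m, n)` as the integral over `[α, β] × [0, γ]` of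
`u_m u_n + v_m v_n` with `u_n = n^{-s} cos(t log n)` and `v_n = n^{-s} sin(t log n)`, so the form
is the integral of `|∑ c_n u_n|² + |∑ c_n v_n|² ≥ 0`. At `t = 0` the first sum is the Dirichlet
polynomial `∑ c_n n^{-s}`, which cannot vanish on all of `[α, β]` since it is real analytic and
a Dirichlet series vanishing for large `s` has zero coefficients; by continuity the integral is
positive.
-/

open Filter Topology Set intervalIntegral MeasureTheory

theorem intervalIntegral_pos_of_continuous_of_pos_at {f : ℝ → ℝ} {a b x₀ : ℝ}
    (hf : Continuous f) (hab : a < b) (hnonneg : ∀ x ∈ Icc a b, 0 ≤ f x)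
    (hx₀ : x₀ ∈ Icc a b) (hpos : 0 < f x₀) : 0 < ∫ x in a..b, f x := by
  have hae : 0 ≤ᵐ[volume.restrict (uIoc a b)] f := by
    rw [uIoc_of_le hab.le]
    exact ae_restrict_of_forall_mem measurableSet_Ioc fun x hx => hnonneg x (Ioc_subset_Icc_self hx)
  rw [integral_pos_iff_support_of_nonneg_ae' hae (hf.intervalIntegrable a b)]
  refine ⟨hab, ?_⟩
  have hmeet : (Function.support f ∩ Ioo a b).Nonempty :=
    mem_closure_iff.1 (closure_Ioo hab.ne ▸ hx₀) _ hf.isOpen_support hpos.ne'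
  exact ((hf.isOpen_support.inter isOpen_Ioo).measure_pos volume hmeet).trans_le
    (measure_mono (inter_subset_inter_right _ Ioo_subset_Ioc_self))

theorem integral_const_rpow {y : ℝ} (hy : 0 < y) (hy1 : y ≠ 1) (a b : ℝ) :
    ∫ s in a..b, y ^ s = (y ^ b - y ^ a) / Real.log y := by
  have hlog : Real.log y ≠ 0 := Real.log_ne_zero_of_pos_of_ne_one hy hy1
  simp only [Real.rpow_def_of_pos hy]
  rw [integral_comp_mul_left Real.exp hlog, integral_exp, smul_eq_mul, inv_mul_eq_div]

theorem integral_const_rpow_neg {y : ℝ} (hy : 0 < y) (hy1 : y ≠ 1) (a b : ℝ) :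
    ∫ s in a..b, y ^ (-s) = ((1 / y) ^ a - (1 / y) ^ b) / Real.log y := by
  simp only [Real.rpow_neg hy.le, ← Real.inv_rpow hy.le]
  rw [integral_const_rpow (inv_pos.2 hy) (inv_ne_one.2 hy1), Real.log_inv, one_div, div_neg,
    ← neg_div, neg_sub]

theorem integral_cos_mul_const {x : ℝ} (hx : x ≠ 0) (a b : ℝ) :
    ∫ t in a..b, Real.cos (t * x) = (Real.sin (b * x) - Real.sin (a * x)) / x := by
  simp only [← mul_comm x]
  rw [integral_comp_mul_left Real.cos hx, integral_cos, smul_eq_mul, inv_mul_eq_div]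

def hermForm {ι : Type*} (S : Finset ι) (c : ι → ℂ) (A : ι → ι → ℝ) : ℂ :=
  ∑ m ∈ S, ∑ n ∈ S, starRingEnd ℂ (c m) * (A m n : ℂ) * c n

section hermForm

variable {ι : Type*} (S : Finset ι) (c : ι → ℂ)

theorem hermForm_add (A B : ι → ι → ℝ) :
    hermForm S c (fun m n => A m n + B m n) = hermForm S c A + hermForm S c B := by
  simp only [hermForm, ← Finset.sum_add_distrib, ofReal_add]
  refine Finset.sum_congr rfl fun m _ => Finset.sum_congr rfl fun n _ => ?_
  ring

theorem hermForm_mul_self (u : ι → ℝ) :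
    hermForm S c (fun m n => u m * u n) = normSq (∑ n ∈ S, c n * u n) := by
  rw [← mul_conj, mul_comm, map_sum, Finset.sum_mul_sum, hermForm]
  refine Finset.sum_congr rfl fun m _ => Finset.sum_congr rfl fun n _ => ?_
  simp only [map_mul, conj_ofReal, ofReal_mul]
  ring

theorem hermForm_integral {a b : ℝ} {k : ι → ι → ℝ → ℝ}
    (hk : ∀ m n, IntervalIntegrable (k m n) volume a b) :
    hermForm S c (fun m n => ∫ x in a..b, k m n x) =
      ∫ x in a..b, hermForm S c (fun m n => k m n x) := by
  have hterm : ∀ m n, IntervalIntegrable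
      (fun x => starRingEnd ℂ (c m) * (k m n x : ℂ) * c n) volume a b := fun m n =>
    (IntervalIntegrable.const_mul ⟨(hk m n).1.ofReal, (hk m n).2.ofReal⟩ _).mul_const _
  have hrow : ∀ m, IntervalIntegrable
      (fun x => ∑ n ∈ S, starRingEnd ℂ (c m) * (k m n x : ℂ) * c n) volume a b := fun m => by
    simpa only [Finset.sum_fn] using IntervalIntegrable.sum S fun n _ => hterm m n
  simp only [hermForm, intervalIntegral.integral_finsetSum fun m _ => hrow m,
    intervalIntegral.integral_finsetSum fun n _ => hterm _ n, intervalIntegral.integral_mul_const,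
    intervalIntegral.integral_const_mul, intervalIntegral.integral_ofReal]

end hermForm

theorem LSeries.abscissaOfAbsConv_finsupp (g : ℕ →₀ ℂ) : LSeries.abscissaOfAbsConv g = ⊥ := by
  refine le_bot_iff.mp <| LSeries.abscissaOfAbsConv_le_of_forall_lt_LSeriesSummable' fun y _ =>
    summable_of_hasFiniteSupport <| Set.Finite.subset g.hasFiniteSupport fun n hn => ?_
  contrapose! hn
  simp [LSeries.term_def, show g n = 0 by simpa using hn]

theorem LSeries.coeff_eq_zero_of_forall_mem_Icc {f : ℕ → ℂ} {a b : ℝ}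
    (hf : LSeries.abscissaOfAbsConv f < a) (hab : a < b) (h : ∀ x ∈ Icc a b, LSeries f x = 0) :
    ∀ n ≠ 0, f n = 0 := by
  have hanalytic : AnalyticOnNhd ℝ (fun x : ℝ => LSeries f x) (Ioi a) := fun x hx =>
    ((LSeries_analyticOnNhd f x (hf.trans (EReal.coe_lt_coe_iff.2 hx))).restrictScalars).comp
      (ofRealCLM.analyticAt x)
  have hmid : (fun x : ℝ => LSeries f x) =ᶠ[𝓝 ((a + b) / 2)] 0 := by
    filter_upwards [Ioo_mem_nhds (by linarith : a < (a + b) / 2) (by linarith : (a + b) / 2 < b)]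
      with x hx using h x (Ioo_subset_Icc_self hx)
  have hzero := hanalytic.eqOn_zero_of_preconnected_of_eventuallyEq_zero isPreconnected_Ioi
    (by simp only [mem_Ioi]; linarith) hmid
  exact (LSeries_eventually_eq_zero_iff'.1
    (eventually_of_mem (Ioi_mem_atTop a) hzero)).resolve_right hf.ne_top

theorem LSeries_mapDomain_succ (c : ℕ →₀ ℂ) (s : ℂ) :
    LSeries (c.mapDomain Nat.succ) s = ∑ n ∈ c.support, c n / ((n : ℂ) + 1) ^ s := by
  have hsupp : Function.support (LSeries.term (c.mapDomain Nat.succ) s) ⊆ range Nat.succ := by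
    rintro (_ | n) h
    · simp [LSeries.term_def] at h
    · exact mem_range_self n
  rw [LSeries, ← Nat.succ_injective.tsum_eq hsupp, tsum_eq_sum (s := c.support)]
  · refine Finset.sum_congr rfl fun n _ => ?_
    simp [Finsupp.mapDomain_apply Nat.succ_injective]
  · intro n hn
    simp [Finsupp.mapDomain_apply Nat.succ_injective, Finsupp.notMem_support_iff.mp hn]

theorem exists_mem_Icc_LSeries_mapDomain_succ_ne_zero {c : ℕ →₀ ℂ} (hc : c ≠ 0) {a b : ℝ}
    (hab : a < b) : ∃ s ∈ Icc a b, LSeries (c.mapDomain Nat.succ) s ≠ 0 := by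
  by_contra! h
  refine hc (Finsupp.ext fun n => ?_)
  simpa [Finsupp.mapDomain_apply Nat.succ_injective] using
    LSeries.coeff_eq_zero_of_forall_mem_Icc (by simp [LSeries.abscissaOfAbsConv_finsupp]) hab h
      (n + 1) n.succ_ne_zero

-- Indexed from `0`: `cosTerm s t n - i * sinTerm s t n = (n + 1) ^ (-(s + i t))`.
noncomputable def cosTerm (s t : ℝ) (n : ℕ) : ℝ :=
  ((n : ℝ) + 1) ^ (-s) * Real.cos (t * Real.log ((n : ℝ) + 1))

noncomputable def sinTerm (s t : ℝ) (n : ℕ) : ℝ :=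
  ((n : ℝ) + 1) ^ (-s) * Real.sin (t * Real.log ((n : ℝ) + 1))

theorem rpow_neg_mul_cos_eq (s t : ℝ) (m n : ℕ) :
    (((m : ℝ) + 1) * ((n : ℝ) + 1)) ^ (-s) *
        Real.cos (t * Real.log (((m : ℝ) + 1) / ((n : ℝ) + 1))) =
      cosTerm s t m * cosTerm s t n + sinTerm s t m * sinTerm s t n := by
  rw [Real.mul_rpow (by positivity) (by positivity), Real.log_div (by positivity) (by positivity),
    mul_sub, Real.cos_sub, cosTerm, cosTerm, sinTerm, sinTerm]
  ring

theorem aMat_succ_eq_integral (α β γ : ℝ) (m n : ℕ) :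
    aMat α β γ (m + 1) (n + 1) = ∫ s in α..β, ∫ t in (0 : ℝ)..γ,
      (cosTerm s t m * cosTerm s t n + sinTerm s t m * sinTerm s t n) := by
  simp only [← rpow_neg_mul_cos_eq, intervalIntegral.integral_const_mul,
    intervalIntegral.integral_mul_const]
  rw [aMat]
  push_cast
  congr 1
  · split_ifs with h
    · obtain ⟨rfl, rfl⟩ : m = 0 ∧ n = 0 := by simpa using h
      simp
    · have hy : ((m : ℝ) + 1) * ((n : ℝ) + 1) ≠ 1 := by exact_mod_cast h
      rw [integral_const_rpow_neg (by positivity) hy]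
  · split_ifs with h
    · simp [show m = n by omega]
    · have hlog : Real.log (((m : ℝ) + 1) / ((n : ℝ) + 1)) ≠ 0 :=
        Real.log_ne_zero_of_pos_of_ne_one (by positivity)
          (by rw [Ne, div_eq_one_iff_eq (by positivity)]; simpa using h)
      rw [integral_cos_mul_const hlog, zero_mul, Real.sin_zero, sub_zero]

noncomputable def gramKernel (c : ℕ →₀ ℂ) (s t : ℝ) : ℝ :=
  normSq (∑ n ∈ c.support, c n * cosTerm s t n) + normSq (∑ n ∈ c.support, c n * sinTerm s t n)

theorem continuous_gramKernel (c : ℕ →₀ ℂ) : Continuous (Function.uncurry (gramKernel c)) := by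
  unfold gramKernel cosTerm sinTerm Function.uncurry
  fun_prop (disch := intro; positivity)

theorem gramKernel_nonneg (c : ℕ →₀ ℂ) (s t : ℝ) : 0 ≤ gramKernel c s t :=
  add_nonneg (normSq_nonneg _) (normSq_nonneg _)

theorem sum_mul_cosTerm_zero (c : ℕ →₀ ℂ) (s : ℝ) :
    ∑ n ∈ c.support, c n * cosTerm s 0 n = LSeries (c.mapDomain Nat.succ) s := by
  rw [LSeries_mapDomain_succ]
  refine Finset.sum_congr rfl fun n _ => ?_
  rw [cosTerm, zero_mul, Real.cos_zero, mul_one, Real.rpow_neg (by positivity), ofReal_inv,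
    ofReal_cpow (by positivity), div_eq_mul_inv]
  push_cast
  rfl

theorem hermForm_aMat_eq_integral (α β γ : ℝ) (c : ℕ →₀ ℂ) :
    hermForm c.support c (fun m n => aMat α β γ (m + 1) (n + 1)) =
      ((∫ s in α..β, ∫ t in (0 : ℝ)..γ, gramKernel c s t : ℝ) : ℂ) := by
  have hcont : ∀ m n, Continuous (Function.uncurry fun s t =>
      cosTerm s t m * cosTerm s t n + sinTerm s t m * sinTerm s t n) := fun m n => by
    unfold cosTerm sinTerm Function.uncurry
    fun_prop (disch := intro; positivity)
  simp only [aMat_succ_eq_integral]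
  rw [hermForm_integral _ _ fun m n =>
    (continuous_parametric_intervalIntegral_of_continuous' (hcont m n) 0 γ).intervalIntegrable _ _]
  simp only [hermForm_integral _ _ fun m n => ((hcont m n).uncurry_left _).intervalIntegrable _ _,
    hermForm_add, hermForm_mul_self]
  simp only [gramKernel, ofReal_add, ← intervalIntegral.integral_ofReal]

theorem integral_gramKernel_pos {c : ℕ →₀ ℂ} (hc : c ≠ 0) {α β γ : ℝ} (hαβ : α < β)
    (hγ : 0 < γ) : 0 < ∫ s in α..β, ∫ t in (0 : ℝ)..γ, gramKernel c s t := by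
  obtain ⟨s₀, hs₀, hne⟩ := exists_mem_Icc_LSeries_mapDomain_succ_ne_zero hc hαβ
  have hpos : 0 < gramKernel c s₀ 0 := by
    rw [← sum_mul_cosTerm_zero] at hne
    exact add_pos_of_pos_of_nonneg (normSq_pos.2 hne) (normSq_nonneg _)
  refine intervalIntegral_pos_of_continuous_of_pos_at
    (continuous_parametric_intervalIntegral_of_continuous' (continuous_gramKernel c) 0 γ) hαβ
    (fun s _ => intervalIntegral.integral_nonneg hγ.le fun t _ => gramKernel_nonneg c s t) hs₀ ?_
  exact intervalIntegral_pos_of_continuous_of_pos_at ((continuous_gramKernel c).uncurry_left s₀)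
    hγ (fun t _ => gramKernel_nonneg c s₀ t) (left_mem_Icc.2 hγ.le) hpos

theorem statement4_general (α β γ : ℝ) (hαβ : α < β) (hγ : 0 < γ) :
    (∀ m n : ℕ, aMat α β γ (m + 1) (n + 1) = aMat α β γ (n + 1) (m + 1)) ∧
    (∀ c : ℕ →₀ ℂ, c ≠ 0 →
      (∑ m ∈ c.support, ∑ n ∈ c.support,
        (starRingEnd ℂ) (c m) * (aMat α β γ (m + 1) (n + 1) : ℂ) * c n).im = 0 ∧
      0 < (∑ m ∈ c.support, ∑ n ∈ c.support,
        (starRingEnd ℂ) (c m) * (aMat α β γ (m + 1) (n + 1) : ℂ) * c n).re) := by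
  refine ⟨fun m n => ?_, fun c hc => ?_⟩
  · simp only [aMat_succ_eq_integral, mul_comm (cosTerm _ _ m), mul_comm (sinTerm _ _ m)]
  · change (hermForm c.support c fun m n => aMat α β γ (m + 1) (n + 1)).im = 0 ∧
      0 < (hermForm c.support c fun m n => aMat α β γ (m + 1) (n + 1)).re
    rw [hermForm_aMat_eq_integral, ofReal_im, ofReal_re]
    exact ⟨rfl, integral_gramKernel_pos hc hαβ hγ⟩

/-- for `1/2 < α < β < 1` and `γ > 0`, the infinite matrix
`A_{α,β,γ} = (a_{α,β,γ}(m,n))_{m,n ≥ 1}` is symmetric, and for every finitely supported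
complex sequence `c ≠ 0`, the Hermitian form `Σ_m Σ_n conj(c_m) a_{α,β,γ}(m,n) c_n`
is a strictly positive real number. -/
theorem statement4 (α β γ : ℝ) (hα : 1 / 2 < α) (hαβ : α < β) (hβ : β < 1) (hγ : 0 < γ) :
    (∀ m n : ℕ, aMat α β γ (m + 1) (n + 1) = aMat α β γ (n + 1) (m + 1)) ∧
    (∀ c : ℕ →₀ ℂ, c ≠ 0 →
      (∑ m ∈ c.support, ∑ n ∈ c.support,
        (starRingEnd ℂ) (c m) * (aMat α β γ (m + 1) (n + 1) : ℂ) * c n).im = 0 ∧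
      0 < (∑ m ∈ c.support, ∑ n ∈ c.support,
        (starRingEnd ℂ) (c m) * (aMat α β γ (m + 1) (n + 1) : ℂ) * c n).re) :=
  statement4_general α β γ hαβ hγ
end

section
/- Let (x(k))_{k≥1} be a complex sequence such that the Dirichlet series Σ_{k≥1} x(k) k^{−s} converges (pointwise) for every s ∈ ℂ with Re(s) > 0, and let f_x(s) denote its sum. Then for every compact subset K of the half-plane {s ∈ ℂ : Re(s) > 0}, the partial sums s ↦ Σ_{k=1}^{N} x(k) k^{−s} converge to f_x uniformly on K as N → ∞. -/
open Complex Filter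

/-!
Abel summation around a real base point `σ > 0`. Writing `k ^ (-s) = k ^ (-σ) * k ^ (-w)` with
`w = s - σ`, the block `∑_{M ≤ k < n} x(k) k^(-s)` is bounded by the oscillation of the partial
sums at `σ` times `1 + ∑_k |(k+1)^(-w) - k^(-w)|`, and comparing each difference with
`w ∫ t^(-w-1) dt` bounds that variation by `|w| / Re w`. Once `σ` is below `min Re` on the
compact set `K`, the ratio `|s - σ| / Re (s - σ)` is bounded on `K`, so the Cauchy property of
the series at `σ` makes the partial sums uniformly Cauchy on `K`.
-/

noncomputable def dirichletPartialSum (x : ℕ → ℂ) (N : ℕ) (s : ℂ) : ℂ :=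
  ∑ k ∈ Finset.range N, x (k + 1) * ((k + 1 : ℕ) : ℂ) ^ (-s)

def stolzSector (s₀ : ℂ) (C : ℝ) : Set ℂ :=
  {s | 0 < (s - s₀).re ∧ ‖s - s₀‖ ≤ C * (s - s₀).re}

theorem sum_Ico_smul_eq_sub_sum_Ico_sub_smul {R E : Type*} [Ring R] [AddCommGroup E]
    [Module R E] (g : ℕ → R) (a : ℕ → E) {M n : ℕ} (hMn : M ≤ n) :
    ∑ k ∈ Finset.Ico M n, g k • a k =
      g n • ∑ k ∈ Finset.Ico M n, a k -
        ∑ k ∈ Finset.Ico M n, (g (k + 1) - g k) • ∑ j ∈ Finset.Ico M (k + 1), a j := by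
  induction n, hMn using Nat.le_induction with
  | base => simp
  | succ n hMn ih =>
    rw [Finset.sum_Ico_succ_top hMn, ih, Finset.sum_Ico_succ_top hMn, Finset.sum_Ico_succ_top hMn,
      Finset.sum_Ico_succ_top hMn]
    simp only [sub_smul, smul_add]
    abel

theorem norm_sum_Ico_smul_le_of_norm_sum_Ico_le {𝕜 E : Type*} [NormedField 𝕜]
    [NormedAddCommGroup E] [NormedSpace 𝕜 E] (g : ℕ → 𝕜) (a : ℕ → E) {M n : ℕ} (hMn : M ≤ n)
    {δ : ℝ}
    (ha : ∀ m ∈ Finset.Icc M n, ‖∑ k ∈ Finset.Ico M m, a k‖ ≤ δ) :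
    ‖∑ k ∈ Finset.Ico M n, g k • a k‖ ≤
      δ * (‖g n‖ + ∑ k ∈ Finset.Ico M n, ‖g (k + 1) - g k‖) := by
  rw [sum_Ico_smul_eq_sub_sum_Ico_sub_smul g a hMn, mul_add, Finset.mul_sum]
  refine (norm_sub_le _ _).trans (add_le_add ?_ ((norm_sum_le _ _).trans
    (Finset.sum_le_sum fun k hk => ?_)))
  · rw [norm_smul, mul_comm]
    exact mul_le_mul_of_nonneg_right (ha n (by simp [hMn])) (norm_nonneg _)
  · obtain ⟨hMk, hkn⟩ := Finset.mem_Ico.mp hk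
    rw [norm_smul, mul_comm]
    exact mul_le_mul_of_nonneg_right (ha (k + 1) (Finset.mem_Icc.mpr ⟨by omega, hkn⟩))
      (norm_nonneg _)

theorem norm_ofReal_cpow_neg_sub_le {w : ℂ} (hw : 0 < w.re) {a b : ℝ} (ha : 0 < a)
    (hab : a ≤ b) :
    ‖(b : ℂ) ^ (-w) - (a : ℂ) ^ (-w)‖ ≤ ‖w‖ / w.re * (a ^ (-w.re) - b ^ (-w.re)) := by
  have h0 : (0 : ℝ) ∉ Set.uIcc a b := by
    rw [Set.uIcc_of_le hab]
    exact fun h => ha.not_ge h.1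
  have hw0 : w ≠ 0 := fun h => by simp [h] at hw
  have hcpow : (b : ℂ) ^ (-w) - (a : ℂ) ^ (-w) = -w * ∫ t in a..b, (t : ℂ) ^ (-w - 1) := by
    rw [integral_cpow (Or.inr ⟨by simpa [sub_eq_add_neg, add_comm] using hw0, h0⟩),
      sub_add_cancel]
    field_simp
  have hrpow : ∫ t in a..b, t ^ (-w.re - 1) = (a ^ (-w.re) - b ^ (-w.re)) / w.re := by
    rw [integral_rpow (Or.inr ⟨by linarith, h0⟩), sub_add_cancel, div_neg, ← neg_div, neg_sub]
  calc ‖(b : ℂ) ^ (-w) - (a : ℂ) ^ (-w)‖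
      ≤ ‖w‖ * ∫ t in a..b, ‖(t : ℂ) ^ (-w - 1)‖ := by
        rw [hcpow, norm_mul, norm_neg]
        gcongr
        exact intervalIntegral.norm_integral_le_integral_norm hab
    _ = ‖w‖ * ∫ t in a..b, t ^ (-w.re - 1) := by
        congr 1
        refine intervalIntegral.integral_congr fun t ht => ?_
        rw [Set.uIcc_of_le hab] at ht
        simp [norm_cpow_eq_rpow_re_of_pos (ha.trans_le ht.1)]
    _ = ‖w‖ / w.re * (a ^ (-w.re) - b ^ (-w.re)) := by
        rw [hrpow]
        ring

theorem sum_range_norm_natCast_cpow_neg_sub_le {w : ℂ} (hw : 0 < w.re) (n : ℕ) :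
    ∑ k ∈ Finset.range n, ‖((k + 1 + 1 : ℕ) : ℂ) ^ (-w) - ((k + 1 : ℕ) : ℂ) ^ (-w)‖ ≤
      ‖w‖ / w.re := by
  set r := w.re
  calc ∑ k ∈ Finset.range n, ‖((k + 1 + 1 : ℕ) : ℂ) ^ (-w) - ((k + 1 : ℕ) : ℂ) ^ (-w)‖
      ≤ ∑ k ∈ Finset.range n,
          ‖w‖ / r * (((k + 1 : ℕ) : ℝ) ^ (-r) - ((k + 1 + 1 : ℕ) : ℝ) ^ (-r)) := by
        refine Finset.sum_le_sum fun k _ => ?_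
        simp only [← ofReal_natCast]
        exact norm_ofReal_cpow_neg_sub_le hw (by positivity) (by simp)
    _ = ‖w‖ / r * (1 - ((n + 1 : ℕ) : ℝ) ^ (-r)) := by
        rw [← Finset.mul_sum, Finset.sum_range_sub' (fun k => ((k + 1 : ℕ) : ℝ) ^ (-r))]
        simp
    _ ≤ ‖w‖ / r := by
        have : 0 ≤ ((n + 1 : ℕ) : ℝ) ^ (-r) := by positivity
        exact mul_le_of_le_one_right (by positivity) (by linarith)

theorem dirichletPartialSum_sub_eq_sum_Ico (x : ℕ → ℂ) (s : ℂ) {M m : ℕ} (hMm : M ≤ m) :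
    dirichletPartialSum x m s - dirichletPartialSum x M s =
      ∑ k ∈ Finset.Ico M m, x (k + 1) * ((k + 1 : ℕ) : ℂ) ^ (-s) :=
  (Finset.sum_Ico_eq_sub _ hMm).symm

theorem norm_dirichletPartialSum_sub_le (x : ℕ → ℂ) {s₀ s : ℂ} (hs : 0 < (s - s₀).re)
    {M n : ℕ} (hMn : M ≤ n) {δ : ℝ}
    (hδ : ∀ m ∈ Finset.Icc M n,
      ‖dirichletPartialSum x m s₀ - dirichletPartialSum x M s₀‖ ≤ δ) :
    ‖dirichletPartialSum x n s - dirichletPartialSum x M s‖ ≤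
      δ * (1 + ‖s - s₀‖ / (s - s₀).re) := by
  set w := s - s₀
  set g : ℕ → ℂ := fun k => ((k + 1 : ℕ) : ℂ) ^ (-w)
  have hterm : ∀ k : ℕ, x (k + 1) * ((k + 1 : ℕ) : ℂ) ^ (-s) =
      g k • (x (k + 1) * ((k + 1 : ℕ) : ℂ) ^ (-s₀)) := by
    intro k
    rw [smul_eq_mul, mul_left_comm, ← cpow_add _ _ (Nat.cast_ne_zero.mpr k.succ_ne_zero)]
    congr 2
    ring
  have hδ₀ : 0 ≤ δ := (norm_nonneg _).trans (hδ M (by simp [hMn]))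
  rw [dirichletPartialSum_sub_eq_sum_Ico x s hMn]
  simp only [hterm]
  refine (norm_sum_Ico_smul_le_of_norm_sum_Ico_le g _ hMn (δ := δ) fun m hm => ?_).trans ?_
  · rw [← dirichletPartialSum_sub_eq_sum_Ico x s₀ (Finset.mem_Icc.mp hm).1]
    exact hδ m hm
  · have hgn : ‖g n‖ ≤ 1 := by
      rw [norm_natCast_cpow_of_pos n.succ_pos]
      exact Real.rpow_le_one_of_one_le_of_nonpos (by simp) (by simp [hs.le])
    have hvar : ∑ k ∈ Finset.Ico M n, ‖g (k + 1) - g k‖ ≤ ‖w‖ / w.re :=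
      (Finset.sum_le_sum_of_subset_of_nonneg
        (fun k hk => Finset.mem_range.mpr (Finset.mem_Ico.mp hk).2)
        fun _ _ _ => norm_nonneg _).trans (sum_range_norm_natCast_cpow_neg_sub_le hs n)
    gcongr

theorem uniformCauchySeqOn_dirichletPartialSum_stolzSector {x : ℕ → ℂ} {s₀ : ℂ}
    (hs₀ : CauchySeq fun N => dirichletPartialSum x N s₀) (C : ℝ) :
    UniformCauchySeqOn (dirichletPartialSum x) atTop (stolzSector s₀ C) := by
  rw [Metric.uniformCauchySeqOn_iff]
  intro ε hε
  obtain ⟨δ, hδ, hδε⟩ := exists_pos_mul_lt (half_pos hε) (1 + C)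
  obtain ⟨N, hN⟩ := Metric.cauchySeq_iff'.mp hs₀ δ hδ
  have htail : ∀ n ≥ N, ∀ s ∈ stolzSector s₀ C,
      dist (dirichletPartialSum x n s) (dirichletPartialSum x N s) ≤ δ * (1 + C) := by
    intro n hn s ⟨hre, hC⟩
    rw [dist_eq_norm]
    refine (norm_dirichletPartialSum_sub_le x hre hn (δ := δ) fun m hm => ?_).trans ?_
    · rw [← dist_eq_norm]
      exact (hN m (Finset.mem_Icc.mp hm).1).le
    · gcongr
      exact (div_le_iff₀ hre).mpr hC
  refine ⟨N, fun m hm n hn s hs => ?_⟩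
  calc dist (dirichletPartialSum x m s) (dirichletPartialSum x n s)
      ≤ dist (dirichletPartialSum x m s) (dirichletPartialSum x N s) +
          dist (dirichletPartialSum x n s) (dirichletPartialSum x N s) :=
        dist_triangle_right _ _ _
    _ ≤ δ * (1 + C) + δ * (1 + C) := add_le_add (htail m hm s hs) (htail n hn s hs)
    _ < ε := by linarith

theorem IsCompact.exists_subset_stolzSector {K : Set ℂ} (hK : IsCompact K)
    (hKsub : K ⊆ {s : ℂ | 0 < s.re}) :
    ∃ σ : ℝ, 0 < σ ∧ ∃ C : ℝ, K ⊆ stolzSector σ C := by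
  obtain ⟨σ, hσ, hσK⟩ := hK.exists_forall_le' continuous_re.continuousOn hKsub
  obtain ⟨R, hR, hRK⟩ := hK.isBounded.exists_pos_norm_le
  refine ⟨σ / 2, half_pos hσ, (R + σ / 2) / (σ / 2), fun s hs => ?_⟩
  have hre : σ / 2 ≤ (s - (σ / 2 : ℝ)).re := by
    simp only [sub_re, ofReal_re]
    linarith [hσK s hs]
  refine ⟨by linarith, ?_⟩
  calc ‖s - (σ / 2 : ℝ)‖ ≤ R + σ / 2 := by
        refine (norm_sub_le _ _).trans ?_
        simp [abs_of_pos hσ, hRK s hs]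
    _ = (R + σ / 2) / (σ / 2) * (σ / 2) := by field_simp
    _ ≤ (R + σ / 2) / (σ / 2) * (s - (σ / 2 : ℝ)).re := by gcongr

/-- if the Dirichlet series `Σ_{k≥1} x(k) k^{-s}` converges pointwise to `f s`
at every point `s` of the open half-plane `Re s > 0`, then its partial sums converge to `f`
uniformly on every compact subset of that half-plane. -/
theorem statement6 (x : ℕ → ℂ) (f : ℂ → ℂ)
    (hf : ∀ s : ℂ, 0 < s.re →
      Tendsto (fun N : ℕ => ∑ k ∈ Finset.range N, x (k + 1) * ((k + 1 : ℕ) : ℂ) ^ (-s))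
        atTop (nhds (f s)))
    (K : Set ℂ) (hK : IsCompact K) (hKsub : K ⊆ {s : ℂ | 0 < s.re}) :
    TendstoUniformlyOn
      (fun (N : ℕ) (s : ℂ) => ∑ k ∈ Finset.range N, x (k + 1) * ((k + 1 : ℕ) : ℂ) ^ (-s))
      f atTop K := by
  obtain ⟨σ, hσ, C, hKC⟩ := hK.exists_subset_stolzSector hKsub
  have hσconv : CauchySeq fun N => dirichletPartialSum x N σ :=
    (hf σ (by simpa using hσ)).cauchySeq
  exact ((uniformCauchySeqOn_dirichletPartialSum_stolzSector hσconv C).mono hKC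
    ).tendstoUniformlyOn_of_tendsto fun s hs => hf s (hKsub hs)
end

section
/- Let K be a compact subset with nonempty interior of the half-plane {s ∈ ℂ : Re(s) > 0}, and let (x(k))_{k≥1} be a complex sequence such that the Dirichlet series Σ_{k≥1} x(k) k^{−s} converges for every s with Re(s) > 0, with sum f_x. Then Parseval's identity holds for f_x with respect to the orthonormal family (e′_n(K))_{n≥1}: ‖f_x‖²_{L²(K)} = Σ_{n≥1} |⟨e′_n(K), f_x⟩_{L²(K)}|². In particular, f_x belongs to the closure in L²(K) of the linear span of the functions s ↦ n^{−s}, n ≥ 1. -/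
/-!
Convergence of the Dirichlet series at a real point `σ₀ > 0` to the left of `K` bounds its
partial sums there, and Abel summation turns this into a bound on the partial sums that is
uniform on `K`, because `Re s - σ₀` stays away from `0` and `|s - σ₀|` stays bounded there. By
dominated convergence the partial sums, which lie in the span of the `e_n`, converge to `f` in
`L²(K)`. Parseval's identity for a Gram–Schmidt system holds for every vector of the closed
span of the original family: the vectors that Gram–Schmidt sends to `0` contribute neither to
the sum nor to the span, and the others form an orthonormal family.
-/

open MeasureTheory Complex Filter

/-- The function `e_n : s ↦ n^{-s}` (with 1-based indexing: `eDir n = e_{n+1}`). -/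
noncomputable def eDir (n : ℕ) : ℂ → ℂ := fun s => ((n + 1 : ℕ) : ℂ) ^ (-s)

theorem eDir_memℒp {K : Set ℂ} (hK : IsCompact K) (n : ℕ) :
    MemLp (eDir n) 2 (volume.restrict K) := by
  have hc : Continuous (eDir n) :=
    Continuous.const_cpow continuous_neg (Or.inl (by exact_mod_cast Nat.succ_ne_zero n))
  haveI : IsFiniteMeasure (volume.restrict K) :=
    ⟨by simpa [Measure.restrict_apply_univ] using hK.measure_lt_top⟩
  obtain ⟨C, hC⟩ := hK.exists_bound_of_continuousOn hc.continuousOn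
  exact MemLp.of_bound hc.aestronglyMeasurable C
    ((ae_restrict_iff' hK.measurableSet).mpr (Filter.Eventually.of_forall hC))

/-- `e_n` as an element of the Hilbert space `L²(K)`. -/
noncomputable def eLp {K : Set ℂ} (hK : IsCompact K) (n : ℕ) :
    Lp ℂ 2 (volume.restrict K) :=
  (eDir_memℒp hK n).toLp (eDir n)

/-- `e′_n(K)`: the Gram–Schmidt orthonormalization in `L²(K)` of the family `(e_n)`. -/
noncomputable def ePrime {K : Set ℂ} (hK : IsCompact K) : ℕ → Lp ℂ 2 (volume.restrict K) :=
  InnerProductSpace.gramSchmidtNormed ℂ (eLp hK)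

open scoped InnerProductSpace ENNReal NNReal Topology

section Parseval

open Submodule Set

variable {𝕜 E ι : Type*} [RCLike 𝕜] [NormedAddCommGroup E] [InnerProductSpace 𝕜 E]
  [CompleteSpace E]

theorem Orthonormal.tsum_norm_inner_sq_eq_norm_sq {v : ι → E} (hv : Orthonormal 𝕜 v) {x : E}
    (hx : x ∈ (span 𝕜 (range v)).topologicalClosure) :
    ∑' i, ‖⟪v i, x⟫_𝕜‖ ^ 2 = ‖x‖ ^ 2 := by
  set U := (span 𝕜 (range v)).topologicalClosure
  have : CompleteSpace U := (span 𝕜 (range v)).isClosed_topologicalClosure.completeSpace_coe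
  have hvU : ∀ i, v i ∈ U := fun i => le_topologicalClosure _ (subset_span (mem_range_self i))
  set w : ι → U := Set.codRestrict v U hvU
  have hdense : ⊤ ≤ (span 𝕜 (range w)).topologicalClosure := by
    rintro u -
    have hmap : ((↑) '' (span 𝕜 (range w) : Set U) : Set E) = span 𝕜 (range v) := by
      rw [← coe_subtype, ← map_coe, map_span, ← range_comp]
      rfl
    rw [← SetLike.mem_coe, topologicalClosure_coe, closure_subtype, hmap]
    exact u.2
  have hb := (HilbertBasis.mk (hv.codRestrict U hvU) hdense).hasSum_inner_mul_inner
    ⟨x, hx⟩ ⟨x, hx⟩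
  simp only [HilbertBasis.coe_mk, coe_inner, ← inner_conj_symm (𝕜 := 𝕜) x, RCLike.conj_mul,
    inner_self_eq_norm_sq_to_K] at hb
  exact_mod_cast hb.tsum_eq

theorem InnerProductSpace.tsum_norm_inner_gramSchmidtNormed_sq [LinearOrder ι]
    [LocallyFiniteOrderBot ι] [WellFoundedLT ι] (f : ι → E) {x : E}
    (hx : x ∈ (span 𝕜 (range f)).topologicalClosure) :
    ∑' i, ‖⟪gramSchmidtNormed 𝕜 f i, x⟫_𝕜‖ ^ 2 = ‖x‖ ^ 2 := by
  set S := {i | gramSchmidtNormed 𝕜 f i ≠ 0}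
  have hrange :
      (range fun i : S => gramSchmidtNormed 𝕜 f i) = range (gramSchmidtNormed 𝕜 f) \ {0} := by
    ext y
    simp only [mem_range, Subtype.exists, Set.mem_sdiff, mem_singleton_iff, S, mem_ofPred_eq]
    constructor
    · rintro ⟨i, hi, rfl⟩; exact ⟨⟨i, rfl⟩, hi⟩
    · rintro ⟨⟨i, rfl⟩, hi⟩; exact ⟨i, hi, rfl⟩
  have hspan : span 𝕜 (range fun i : S => gramSchmidtNormed 𝕜 f i) = span 𝕜 (range f) := by
    rw [hrange, span_sdiff_singleton_zero, span_gramSchmidtNormed_range, span_gramSchmidt]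
  rw [← (gramSchmidtNormed_orthonormal' f).tsum_norm_inner_sq_eq_norm_sq (hspan ▸ hx)]
  refine (tsum_subtype_eq_of_support_subset fun i hi => by_contra fun hiS => hi ?_).symm
  simp only [mem_ofPred_eq, not_not] at hiS
  simp [hiS]

end Parseval

namespace MeasureTheory

variable {α E : Type*} [MeasurableSpace α] {μ : Measure α} [NormedAddCommGroup E]

theorem MemLp.norm_toLp_sq {g : α → E} (hg : MemLp g 2 μ) :
    ‖hg.toLp g‖ ^ 2 = ∫ a, ‖g a‖ ^ 2 ∂μ := by
  rw [Lp.norm_toLp, hg.eLpNorm_eq_integral_rpow_norm two_ne_zero ENNReal.ofNat_ne_top,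
    ENNReal.toReal_ofReal (by positivity), ENNReal.toReal_ofNat]
  simp only [Real.rpow_two]
  exact Real.rpow_inv_natCast_pow (n := 2) (integral_nonneg fun a => by positivity) two_ne_zero

theorem MemLp.inner_toLp {𝕜 : Type*} [RCLike 𝕜] {g : α → 𝕜} (hg : MemLp g 2 μ)
    (F : Lp 𝕜 2 μ) :
    ⟪F, hg.toLp g⟫_𝕜 = ∫ a, (starRingEnd 𝕜) (F a) * g a ∂μ := by
  rw [L2.inner_def]
  refine integral_congr_ae ?_
  filter_upwards [hg.coeFn_toLp] with a ha
  rw [ha, RCLike.inner_apply']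

theorem memLp_of_tendsto_ae_of_norm_le {p : ℝ≥0∞} [IsFiniteMeasure μ] {g : ℕ → α → E}
    {f : α → E} {M : ℝ}
    (hg : ∀ n, AEStronglyMeasurable (g n) μ) (hgM : ∀ n, ∀ᵐ a ∂μ, ‖g n a‖ ≤ M)
    (hgf : ∀ᵐ a ∂μ, Tendsto (g · a) atTop (𝓝 (f a))) : MemLp f p μ := by
  refine MemLp.of_bound (aestronglyMeasurable_of_tendsto_ae atTop hg hgf) M ?_
  filter_upwards [ae_all_iff.2 hgM, hgf] with a hM hlim
  exact le_of_tendsto' hlim.norm hM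

theorem tendsto_toLp_of_tendsto_ae_of_norm_le {p : ℝ≥0∞} [Fact (1 ≤ p)] (hp : p ≠ ∞)
    [IsFiniteMeasure μ] {g : ℕ → α → E} {f : α → E} {M : ℝ}
    (hg : ∀ n, MemLp (g n) p μ) (hf : MemLp f p μ) (hgM : ∀ n, ∀ᵐ a ∂μ, ‖g n a‖ ≤ M)
    (hgf : ∀ᵐ a ∂μ, Tendsto (g · a) atTop (𝓝 (f a))) :
    Tendsto (fun n => (hg n).toLp (g n)) atTop (𝓝 (hf.toLp f)) := by
  rw [Lp.tendsto_Lp_iff_tendsto_eLpNorm'']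
  refine tendsto_Lp_finite_of_tendsto_ae Fact.out hp (fun n => (hg n).1) hf ?_ hgf
  refine unifIntegrable_of Fact.out hp (fun n => (hg n).1) fun _ _ => ⟨M.toNNReal + 1, fun n => ?_⟩
  have hzero : {a | M.toNNReal + 1 ≤ ‖g n a‖₊}.indicator (g n) =ᵐ[μ] 0 := by
    filter_upwards [hgM n] with a ha
    refine Set.indicator_of_notMem (fun h => ?_) _
    have h' : (M.toNNReal : ℝ) + 1 ≤ ‖g n a‖ := by exact_mod_cast h
    linarith [M.le_coe_toNNReal]
  rw [eLpNorm_congr_ae hzero, eLpNorm_zero]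
  exact zero_le

end MeasureTheory

section DirichletSeries

open Finset

theorem norm_sum_range_smul_le_of_norm_sum_range_le {R M : Type*} [NormedRing R]
    [NormedAddCommGroup M] [Module R M] [IsBoundedSMul R M] {f : ℕ → R} {g : ℕ → M}
    {A V C : ℝ} (hf : ∀ n, ‖f n‖ ≤ A) (hfV : ∀ n, ∑ i ∈ range n, ‖f (i + 1) - f i‖ ≤ V)
    (hg : ∀ n, ‖∑ i ∈ range n, g i‖ ≤ C) (n : ℕ) :
    ‖∑ i ∈ range n, f i • g i‖ ≤ (A + V) * C := by
  have hC : 0 ≤ C := by simpa using hg 0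
  rw [sum_range_by_parts]
  calc _ ≤ ‖f (n - 1) • ∑ i ∈ range n, g i‖
        + ∑ i ∈ range (n - 1), ‖f (i + 1) - f i‖ * ‖∑ j ∈ range (i + 1), g j‖ :=
        (norm_sub_le _ _).trans (add_le_add_right ((norm_sum_le _ _).trans
          (sum_le_sum fun i _ => norm_smul_le _ _)) _)
    _ ≤ A * C + V * C := by
        gcongr
        · exact norm_smul_le _ _ |>.trans
            (mul_le_mul (hf _) (hg n) (norm_nonneg _) ((norm_nonneg _).trans (hf 0)))
        · exact (sum_le_sum fun i _ => mul_le_mul_of_nonneg_left (hg (i + 1)) (norm_nonneg _)).trans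
            (by rw [← sum_mul]; exact mul_le_mul_of_nonneg_right (hfV _) hC)
    _ = (A + V) * C := by ring

theorem eDir_add (n : ℕ) (s t : ℂ) : eDir n (s + t) = eDir n s * eDir n t := by
  rw [eDir, eDir, eDir, neg_add, cpow_add _ _ (Nat.cast_ne_zero.2 n.succ_ne_zero)]

theorem continuous_eDir (n : ℕ) : Continuous (eDir n) :=
  continuous_neg.const_cpow (Or.inl (Nat.cast_ne_zero.2 n.succ_ne_zero))

theorem norm_eDir (n : ℕ) (s : ℂ) : ‖eDir n s‖ = ((n + 1 : ℕ) : ℝ) ^ (-s.re) := by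
  rw [eDir, norm_natCast_cpow_of_pos n.succ_pos, neg_re]

theorem norm_eDir_le_one (n : ℕ) {s : ℂ} (hs : 0 ≤ s.re) : ‖eDir n s‖ ≤ 1 := by
  rw [norm_eDir]
  exact Real.rpow_le_one_of_one_le_of_nonpos (by simp) (neg_nonpos.2 hs)

theorem norm_eDir_succ_sub_eDir_le {w : ℂ} (hw : -1 ≤ w.re) (k : ℕ) :
    ‖eDir (k + 1) w - eDir k w‖ ≤ ‖w‖ * ((k + 1 : ℕ) : ℝ) ^ (-w.re - 1) := by
  set a : ℝ := ((k + 1 : ℕ) : ℝ)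
  have ha : 1 ≤ a := by simp [a]
  have hderiv : ∀ t ∈ Set.Icc a (a + 1), HasDerivWithinAt (fun t : ℝ => (t : ℂ) ^ (-w))
      (-w * (t : ℂ) ^ (-w - 1)) (Set.Icc a (a + 1)) t := fun t ht =>
    ((hasStrictDerivAt_cpow_const (c := -w) (ofReal_mem_slitPlane.2
      (by linarith [ht.1]))).hasDerivAt.comp_ofReal).hasDerivWithinAt
  have hbound :
      ∀ t ∈ Set.Icc a (a + 1), ‖-w * (t : ℂ) ^ (-w - 1)‖ ≤ ‖w‖ * a ^ (-w.re - 1) := by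
    intro t ht
    rw [norm_mul, norm_neg, norm_cpow_eq_rpow_re_of_pos (by linarith [ht.1])]
    gcongr ‖w‖ * ?_
    exact Real.rpow_le_rpow_of_nonpos (by linarith) ht.1 (by rw [sub_re, neg_re, one_re]; linarith)
  have := (convex_Icc a (a + 1)).norm_image_sub_le_of_norm_hasDerivWithin_le hderiv hbound
    (Set.left_mem_Icc.2 (by linarith)) (Set.right_mem_Icc.2 (by linarith))
  simpa [eDir, a] using this

theorem sum_norm_eDir_succ_sub_eDir_le {δ : ℝ} (hδ : 0 < δ) {w : ℂ} (hw : δ ≤ w.re) (n : ℕ) :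
    ∑ k ∈ range n, ‖eDir (k + 1) w - eDir k w‖
      ≤ ‖w‖ * ∑' k : ℕ, ((k + 1 : ℕ) : ℝ) ^ (-δ - 1) := by
  have hsum : Summable fun k : ℕ => ((k + 1 : ℕ) : ℝ) ^ (-δ - 1) :=
    (summable_nat_add_iff 1).2 (Real.summable_nat_rpow.2 (by linarith))
  calc ∑ k ∈ range n, ‖eDir (k + 1) w - eDir k w‖
      ≤ ∑ k ∈ range n, ‖w‖ * ((k + 1 : ℕ) : ℝ) ^ (-δ - 1) := by
        refine sum_le_sum fun k _ => (norm_eDir_succ_sub_eDir_le (by linarith) k).trans ?_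
        gcongr
        · simp
    _ ≤ ‖w‖ * ∑' k : ℕ, ((k + 1 : ℕ) : ℝ) ^ (-δ - 1) := by
        rw [← mul_sum]
        gcongr
        exact hsum.sum_le_tsum _ fun k _ => by positivity

theorem exists_forall_norm_sum_mul_eDir_le {a : ℕ → ℂ} {s₀ : ℂ} {C : ℝ}
    (hC : ∀ N, ‖∑ k ∈ range N, a k * eDir k s₀‖ ≤ C) {K : Set ℂ} (hK : IsCompact K)
    (hKs₀ : ∀ s ∈ K, s₀.re < s.re) :
    ∃ M, ∀ s ∈ K, ∀ N, ‖∑ k ∈ range N, a k * eDir k s‖ ≤ M := by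
  obtain ⟨δ, hδ, hδK⟩ := hK.exists_forall_le' (continuous_re.sub continuous_const).continuousOn
    fun s hs => sub_pos.2 (hKs₀ s hs)
  obtain ⟨R, hR⟩ :=
    hK.exists_bound_of_continuousOn (continuous_id.sub continuous_const).continuousOn
  set T := ∑' k : ℕ, ((k + 1 : ℕ) : ℝ) ^ (-δ - 1)
  have hT : 0 ≤ T := tsum_nonneg fun k => by positivity
  refine ⟨(1 + R * T) * C, fun s hs N => ?_⟩
  have hw : δ ≤ (s - s₀).re := by simpa using hδK s hs
  have hshift : ∑ k ∈ range N, a k * eDir k s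
      = ∑ k ∈ range N, eDir k (s - s₀) • (a k * eDir k s₀) :=
    sum_congr rfl fun k _ => by rw [smul_eq_mul, ← sub_add_cancel s s₀, eDir_add]; ring_nf
  rw [hshift]
  refine norm_sum_range_smul_le_of_norm_sum_range_le (fun k => norm_eDir_le_one k (by linarith))
    (fun n => (sum_norm_eDir_succ_sub_eDir_le hδ hw n).trans ?_) hC N
  exact mul_le_mul_of_nonneg_right (hR s hs) hT

theorem sum_smul_eDir_apply (t : Finset ℕ) (c : ℕ → ℂ) (s : ℂ) :
    (∑ i ∈ t, c i • eDir i) s = ∑ i ∈ t, c i * eDir i s := by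
  simp [Finset.sum_apply]

theorem memLp_sum_smul_eDir {K : Set ℂ} (hK : IsCompact K) (t : Finset ℕ) (c : ℕ → ℂ) :
    MemLp (∑ i ∈ t, c i • eDir i) 2 (volume.restrict K) :=
  memLp_finsetSum' t fun i _ => (eDir_memℒp hK i).const_smul (c i)

theorem sum_smul_eLp {K : Set ℂ} (hK : IsCompact K) (t : Finset ℕ) (c : ℕ → ℂ) :
    ∑ i ∈ t, c i • eLp hK i = (memLp_sum_smul_eDir hK t c).toLp _ := by
  classical
  induction t using Finset.induction_on with
  | empty => simp
  | insert i t hi ih =>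
    rw [sum_insert hi, ih, eLp, ← MemLp.toLp_const_smul, ← MemLp.toLp_add]
    simp only [sum_insert hi]

theorem exists_memLp_tendsto_sum_smul_eLp {K : Set ℂ} (hK : IsCompact K)
    (hKpos : K ⊆ {s : ℂ | 0 < s.re}) {a : ℕ → ℂ} {f : ℂ → ℂ}
    (hf : ∀ s : ℂ, 0 < s.re →
      Tendsto (fun N => ∑ k ∈ range N, a k * eDir k s) atTop (𝓝 (f s))) :
    ∃ hfL2 : MemLp f 2 (volume.restrict K),
      Tendsto (fun N => ∑ k ∈ range N, a k • eLp hK k) atTop (𝓝 (hfL2.toLp f)) := by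
  have : IsFiniteMeasure (volume.restrict K) := isFiniteMeasure_restrict.2 hK.measure_lt_top.ne
  obtain ⟨σ, hσ, hσK⟩ := hK.exists_forall_le' continuous_re.continuousOn hKpos
  obtain ⟨C, hC⟩ := (hf (σ / 2 : ℝ) (by simpa using hσ)).norm.bddAbove_range
  obtain ⟨M, hM⟩ := exists_forall_norm_sum_mul_eDir_le (fun N => hC ⟨N, rfl⟩) hK
    fun s hs => by simpa using (half_lt_self hσ).trans_le (hσK s hs)
  have hS (N : ℕ) := memLp_sum_smul_eDir hK (range N) a
  have hSM : ∀ N, ∀ᵐ s ∂volume.restrict K, ‖(∑ k ∈ range N, a k • eDir k) s‖ ≤ M := fun N =>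
    ae_restrict_of_forall_mem hK.measurableSet fun s hs => by
      simpa only [sum_smul_eDir_apply] using hM s hs N
  have hSf : ∀ᵐ s ∂volume.restrict K,
      Tendsto (fun N => (∑ k ∈ range N, a k • eDir k) s) atTop (𝓝 (f s)) :=
    ae_restrict_of_forall_mem hK.measurableSet fun s hs => by
      simpa only [sum_smul_eDir_apply] using hf s (hKpos hs)
  have hfL2 : MemLp f 2 (volume.restrict K) :=
    memLp_of_tendsto_ae_of_norm_le (fun N => (hS N).1) hSM hSf
  refine ⟨hfL2, ?_⟩
  simpa only [sum_smul_eLp] using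
    tendsto_toLp_of_tendsto_ae_of_norm_le ENNReal.ofNat_ne_top hS hfL2 hSM hSf

end DirichletSeries

theorem statement9_general {K : Set ℂ} (hK : IsCompact K) (hKpos : K ⊆ {s : ℂ | 0 < s.re})
    (x : ℕ → ℂ) (f : ℂ → ℂ)
    (hf : ∀ s : ℂ, 0 < s.re →
      Tendsto (fun N : ℕ => ∑ k ∈ Finset.range N, x (k + 1) * ((k + 1 : ℕ) : ℂ) ^ (-s))
        atTop (nhds (f s))) :
    ((∫ s in K, ‖f s‖ ^ 2) =
      ∑' n : ℕ, ‖∫ s in K, (starRingEnd ℂ) ((ePrime hK n : ℂ → ℂ) s) * f s‖ ^ 2) ∧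
    (∀ ε : ℝ, 0 < ε → ∃ c : ℕ →₀ ℂ,
      (∫ s in K, ‖f s - ∑ k ∈ c.support, c k * ((k + 1 : ℕ) : ℂ) ^ (-s)‖ ^ 2) < ε ^ 2) := by
  obtain ⟨hfL2, hlim⟩ := exists_memLp_tendsto_sum_smul_eLp hK hKpos hf
  have hF : hfL2.toLp f ∈ (Submodule.span ℂ (Set.range (eLp hK))).topologicalClosure := by
    rw [← SetLike.mem_coe, Submodule.topologicalClosure_coe]
    exact mem_closure_of_tendsto hlim (Eventually.of_forall fun N =>
      Submodule.sum_mem _ fun k _ =>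
        Submodule.smul_mem _ _ (Submodule.subset_span (Set.mem_range_self k)))
  constructor
  · rw [← hfL2.norm_toLp_sq, ← InnerProductSpace.tsum_norm_inner_gramSchmidtNormed_sq _ hF]
    exact tsum_congr fun n => by rw [hfL2.inner_toLp]; rfl
  · intro ε hε
    obtain ⟨y, hy, hFy⟩ := Metric.mem_closure_iff.1 hF ε hε
    obtain ⟨c, rfl⟩ := Finsupp.mem_span_range_iff_exists_finsupp.1 hy
    refine ⟨c, ?_⟩
    rw [Finsupp.sum, sum_smul_eLp, dist_eq_norm, ← MemLp.toLp_sub] at hFy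
    calc _ = ‖(hfL2.sub (memLp_sum_smul_eDir hK c.support c)).toLp _‖ ^ 2 := by
          rw [MemLp.norm_toLp_sq]
          simp only [Pi.sub_apply, sum_smul_eDir_apply]
          rfl
      _ < ε ^ 2 := by gcongr

/-- for a compact `K` with nonempty interior contained in `Re s > 0` and a
Dirichlet series `Σ x(k) k^{-s}` converging pointwise to `f` on `Re s > 0`, Parseval's
identity `‖f‖²_{L²(K)} = Σ_n |⟨e′_n(K), f⟩|²` holds; in particular `f` lies in the `L²(K)`
closure of the span of the `n^{-s}`. -/
theorem statement9 {K : Set ℂ} (hK : IsCompact K) (hKpos : K ⊆ {s : ℂ | 0 < s.re})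
    (hKint : (interior K).Nonempty) (x : ℕ → ℂ) (f : ℂ → ℂ)
    (hf : ∀ s : ℂ, 0 < s.re →
      Tendsto (fun N : ℕ => ∑ k ∈ Finset.range N, x (k + 1) * ((k + 1 : ℕ) : ℂ) ^ (-s))
        atTop (nhds (f s))) :
    ((∫ s in K, ‖f s‖ ^ 2) =
      ∑' n : ℕ, ‖∫ s in K, (starRingEnd ℂ) ((ePrime hK n : ℂ → ℂ) s) * f s‖ ^ 2) ∧
    (∀ ε : ℝ, 0 < ε → ∃ c : ℕ →₀ ℂ,
      (∫ s in K, ‖f s - ∑ k ∈ c.support, c k * ((k + 1 : ℕ) : ℂ) ^ (-s)‖ ^ 2) < ε ^ 2) :=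
  statement9_general hK hKpos x f hf
end
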